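/- arXiv:1305.4905 — 2 statements merged into one kernel-verified Lean document; each statement's English description precedes it below -/
import Mathlib

section
/- Let q be a prime power and let D be a 2-minimal acyclic multicast network with subtree graph H. If D admits a rate-2 linear coding solution over the finite field F_q, then H has a proper coloring with q + 1 colors. -/
namespace NCMinor

variable {V A : Type}

/-- `IsArcWalk tl hd u v p` : the list of arcs `p` forms a directed walk from `u` to `v`
in the multigraph with tail map `tl` and head map `hd`. -/
def IsArcWalk (tl hd : A → V) : V → V → List A → Prop
  | u, v, [] => u = v
  | u, v, a :: p => tl a = u ∧ IsArcWalk tl hd (hd a) v p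

/-- `lam tl hd s v` : the maximum number of pairwise arc-disjoint directed paths
from `s` to `v`. -/
noncomputable def lam (tl hd : A → V) (s v : V) : ℕ :=
  sSup {k | ∃ P : Fin k → List A,
    (∀ i, IsArcWalk tl hd s v (P i)) ∧
    ∀ i j : Fin k, i ≠ j → ∀ a, a ∈ P i → a ∉ P j}

/-- in-degree -/
noncomputable def inDeg (hd : A → V) (v : V) : ℕ := {a | hd a = v}.ncard

/-- `cutVal tl hd U` : number of arcs entering the node set `U` from outside. -/
noncomputable def cutVal (tl hd : A → V) (U : Set V) : ℕ :=
  {a | tl a ∉ U ∧ hd a ∈ U}.ncard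

/-- `eta tl hd s u v` : minimum value of a cut separating `{u, v}` from `s`. -/
noncomputable def eta (tl hd : A → V) (s u v : V) : ℕ :=
  sInf {k | ∃ U : Set V, u ∈ U ∧ v ∈ U ∧ s ∉ U ∧ cutVal tl hd U = k}

def Acyclic (tl hd : A → V) : Prop := ∀ v p, IsArcWalk tl hd v v p → p = []

/-- deleting any arc decreases the max-flow to some node. -/
def LinkMinimal (tl hd : A → V) (s : V) : Prop :=
  ∀ a : A, ∃ v : V,
    lam (fun b : {b : A // b ≠ a} => tl b.1) (fun b => hd b.1) s v < lam tl hd s v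

/-- rate 2 is feasible to every receiver, but infeasible after deleting any arc. -/
def TwoMinimal (tl hd : A → V) (s : V) (T : Set V) : Prop :=
  (∀ t ∈ T, 2 ≤ lam tl hd s t) ∧
  ∀ a : A, ∃ t ∈ T,
    lam (fun b : {b : A // b ≠ a} => tl b.1) (fun b => hd b.1) s t < 2

/-- a rate-2 linear coding solution over the field `F`. -/
def IsCodingSolution (tl hd : A → V) (s : V) (T : Set V) {F : Type} [Field F]
    (φ : A → F × F) : Prop :=
  (∀ a, φ a ≠ 0) ∧
  (∀ a, tl a ≠ s → φ a ∈ Submodule.span F (φ '' {b | hd b = tl a})) ∧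
  (∀ t ∈ T, Submodule.span F (φ '' {b | hd b = t}) = ⊤)

/-- generating relation of the subtree decomposition: consecutive arcs through an
in-degree-1 node lie in the same class. -/
def SubtreeRel (tl hd : A → V) (a b : A) : Prop :=
  hd a = tl b ∧ inDeg hd (hd a) = 1

/-- the subtrees: classes of arcs generated by `SubtreeRel`. -/
def Subtrees (tl hd : A → V) : Type := Quot (SubtreeRel tl hd)

/-- the subtree graph: two subtrees are adjacent iff some node of in-degree 2 has one
incoming arc in each. -/
def subtreeGraph (tl hd : A → V) : SimpleGraph (Subtrees tl hd) where
  Adj x y := x ≠ y ∧ ∃ a b : A,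
    Quot.mk _ a = x ∧ Quot.mk _ b = y ∧ hd a = hd b ∧ inDeg hd (hd a) = 2
  symm := ⟨by
    rintro x y ⟨hxy, a, b, ha, hb, hab, hdeg⟩
    exact ⟨hxy.symm, b, a, hb, ha, hab.symm, hab ▸ hdeg⟩⟩
  loopless := ⟨by rintro x ⟨hxx, -⟩; exact hxx rfl⟩

/-- the underlying (undirected, simple) topology of the network. -/
def topology (tl hd : A → V) : SimpleGraph V where
  Adj u v := u ≠ v ∧ ∃ a, (tl a = u ∧ hd a = v) ∨ (tl a = v ∧ hd a = u)
  symm := ⟨by rintro u v ⟨huv, a, h⟩; exact ⟨huv.symm, a, h.symm⟩⟩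
  loopless := ⟨by rintro u ⟨h, -⟩; exact h rfl⟩

/-- graph minor via branch sets. -/
def IsMinor {W : Type} (M : SimpleGraph W) (G : SimpleGraph V) : Prop :=
  ∃ B : W → Set V,
    (∀ m, (G.induce (B m)).Connected) ∧
    (Pairwise fun m m' => Disjoint (B m) (B m')) ∧
    ∀ m m', M.Adj m m' → ∃ u ∈ B m, ∃ v ∈ B m', G.Adj u v

/-- `S` is the arc set of an `s`-rooted out-tree. -/
def IsOutTree (tl hd : A → V) (s : V) (S : Set A) : Prop :=
  (∀ a ∈ S, hd a ≠ s) ∧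
  Set.InjOn hd S ∧
  ∀ a ∈ S, ∃ p : List A, (∀ b ∈ p, b ∈ S) ∧ IsArcWalk tl hd s (tl a) p

/-- node `v` belongs to the out-tree with root `s` and arc set `S`. -/
def MemTree (tl hd : A → V) (s : V) (S : Set A) (v : V) : Prop :=
  v = s ∨ ∃ a ∈ S, hd a = v ∨ tl a = v

/-- tree decomposition of the graph `G` with host tree `H` and bags `B`. -/
structure IsTreeDecomp (G : SimpleGraph V) {X : Type} (H : SimpleGraph X)
    (B : X → Set V) : Prop where
  isTree : H.IsTree
  mem_bag : ∀ v, ∃ x, v ∈ B x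
  edge_bag : ∀ u v, G.Adj u v → ∃ x, u ∈ B x ∧ v ∈ B x
  bag_connected : ∀ v : V, (H.induce {x | v ∈ B x}).Connected

/-- size of a largest clique. -/
noncomputable def cliqueNumber {W : Type} (G : SimpleGraph W) : ℕ :=
  sSup {n | ∃ t : Finset W, G.IsNClique n t}

end NCMinor

/-!
Colour every arc `a` by the projective point `[φ a] ∈ ℙ(F_q²)`; there are `q + 1` of them.
At a node of in-degree one the coding condition puts the outgoing vectors on the line of the
incoming one, so the colour is constant on subtrees. The two arcs entering a node of in-degree
two must span different lines: at a receiver they span `F_q²`; elsewhere, if they were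
parallel, one of them could be deleted with `φ` still a coding solution, and a coding solution
always yields two arc-disjoint paths to any node whose incoming vectors span `F_q²`, against
2-minimality.
-/

open scoped LinearAlgebra.Projectivization

namespace Projectivization

variable {K W : Type*} [DivisionRing K] [AddCommGroup W] [Module K W]

theorem mk_eq_mk_iff_mem_span {v w : W} (hv : v ≠ 0) (hw : w ≠ 0) :
    mk K v hv = mk K w hw ↔ v ∈ K ∙ w := by
  rw [mk_eq_mk_iff', Submodule.mem_span_singleton]

end Projectivization

namespace NCMinor

open Projectivization

variable {V A : Type} {tl hd : A → V} {s t u v : V}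

section Walks

theorem IsArcWalk.append {w : V} {p q : List A} (hp : IsArcWalk tl hd u v p)
    (hq : IsArcWalk tl hd v w q) : IsArcWalk tl hd u w (p ++ q) := by
  induction p generalizing u with
  | nil => exact (show u = v from hp) ▸ hq
  | cons a p ih => exact ⟨hp.1, ih hp.2⟩

theorem IsArcWalk.concat {p : List A} {a : A} (hp : IsArcWalk tl hd u (tl a) p)
    (ha : hd a = v) : IsArcWalk tl hd u v (p ++ [a]) :=
  hp.append ⟨rfl, ha⟩

theorem IsArcWalk.exists_eq_append_cons {p : List A} {a : A} (h : IsArcWalk tl hd u v p)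
    (ha : a ∈ p) : ∃ p₁ p₂, p = p₁ ++ a :: p₂ ∧
      IsArcWalk tl hd u (tl a) p₁ ∧ IsArcWalk tl hd (hd a) v p₂ := by
  induction p generalizing u with
  | nil => simp at ha
  | cons b p ih =>
    obtain ⟨rfl, h⟩ := h
    rcases List.mem_cons.mp ha with rfl | ha
    · exact ⟨[], p, rfl, rfl, h⟩
    · obtain ⟨p₁, p₂, rfl, h₁, h₂⟩ := ih h ha
      exact ⟨b :: p₁, p₂, rfl, ⟨rfl, h₁⟩, h₂⟩

theorem isArcWalk_map {A' : Type} (ι : A' → A) {p : List A'} :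
    IsArcWalk (fun c => tl (ι c)) (fun c => hd (ι c)) u v p ↔
      IsArcWalk tl hd u v (p.map ι) := by
  induction p generalizing u with
  | nil => rfl
  | cons a p ih => exact and_congr_right' ih

theorem IsArcWalk.attachWith {P : A → Prop} {p : List A} (h : IsArcWalk tl hd u v p)
    (hp : ∀ c ∈ p, P c) :
    IsArcWalk (fun c : Subtype P => tl c.1) (fun c => hd c.1) u v (p.attachWith P hp) :=
  (isArcWalk_map Subtype.val).2 (by rwa [List.attachWith_map_subtype_val])

theorem Acyclic.comap {A' : Type} (h : Acyclic tl hd) (ι : A' → A) :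
    Acyclic (fun c => tl (ι c)) (fun c => hd (ι c)) :=
  fun v _ hp => List.map_eq_nil_iff.mp (h v _ ((isArcWalk_map ι).mp hp))

end Walks

section Precedence

def ArcPrecedes (tl hd : A → V) (a b : A) : Prop :=
  ∃ p, IsArcWalk tl hd (hd a) (tl b) p

theorem ArcPrecedes.trans {a b c : A} (hab : ArcPrecedes tl hd a b)
    (hbc : ArcPrecedes tl hd b c) : ArcPrecedes tl hd a c :=
  let ⟨p, hp⟩ := hab
  let ⟨q, hq⟩ := hbc
  ⟨p ++ b :: q, hp.append ⟨rfl, hq⟩⟩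

theorem IsArcWalk.arcPrecedes_of_mem {p : List A} {a b : A} (h : IsArcWalk tl hd u (tl b) p)
    (ha : a ∈ p) : ArcPrecedes tl hd a b :=
  let ⟨_, _, _, _, h₂⟩ := h.exists_eq_append_cons ha
  ⟨_, h₂⟩

theorem Acyclic.not_arcPrecedes_self (h : Acyclic tl hd) (a : A) : ¬ ArcPrecedes tl hd a a :=
  fun ⟨p, hp⟩ => List.cons_ne_nil a p (h _ _ ⟨rfl, hp⟩)

theorem Acyclic.wellFounded_arcPrecedes [Finite A] (h : Acyclic tl hd) :
    WellFounded (ArcPrecedes tl hd) :=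
  have : IsTrans A (ArcPrecedes tl hd) := ⟨fun _ _ _ => ArcPrecedes.trans⟩
  have : Std.Irrefl (ArcPrecedes tl hd) := ⟨h.not_arcPrecedes_self⟩
  Finite.wellFounded_of_trans_of_irrefl _

end Precedence

section Flow

theorem bddAbove_lamSet [Finite A] (hst : s ≠ t) :
    BddAbove {k | ∃ P : Fin k → List A, (∀ i, IsArcWalk tl hd s t (P i)) ∧
      ∀ i j : Fin k, i ≠ j → ∀ a, a ∈ P i → a ∉ P j} := by
  have := Fintype.ofFinite A
  refine ⟨Fintype.card A, ?_⟩
  rintro k ⟨P, hP, hdisj⟩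
  -- a path from `s` to `t ≠ s` is nonempty, and the first arcs of disjoint paths are distinct
  have hne (i : Fin k) : P i ≠ [] := by
    intro h
    have := hP i
    rw [h] at this
    exact hst this
  have hinj : Function.Injective fun i => (P i).head (hne i) := by
    intro i j (hij : (P i).head (hne i) = (P j).head (hne j))
    by_contra hij'
    exact hdisj i j hij' _ (List.head_mem _) (hij ▸ List.head_mem (hne j))
  simpa using Fintype.card_le_of_injective _ hinj

theorem two_le_lam_of_disjoint [Finite A] (hst : s ≠ t) {P₁ P₂ : List A}
    (h₁ : IsArcWalk tl hd s t P₁) (h₂ : IsArcWalk tl hd s t P₂) (hdisj : P₁.Disjoint P₂) :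
    2 ≤ lam tl hd s t := by
  refine le_csSup (bddAbove_lamSet hst) ⟨![P₁, P₂], fun i => by fin_cases i <;> assumption, ?_⟩
  intro i j hij a hi hj
  fin_cases i <;> fin_cases j
  exacts [hij rfl, hdisj hi hj, hdisj hj hi, hij rfl]

theorem exists_disjoint_of_two_le_lam [Finite A] (hst : s ≠ t) (h : 2 ≤ lam tl hd s t) :
    ∃ P₁ P₂ : List A, IsArcWalk tl hd s t P₁ ∧ IsArcWalk tl hd s t P₂ ∧ P₁.Disjoint P₂ := by
  obtain ⟨P, hP, hdisj⟩ : lam tl hd s t ∈ _ :=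
    Nat.sSup_mem ⟨0, Fin.elim0, fun i => i.elim0, fun i => i.elim0⟩ (bddAbove_lamSet hst)
  exact ⟨P ⟨0, by omega⟩, P ⟨1, h⟩, hP _, hP _, fun a => hdisj _ _ (by simp [Fin.ext_iff]) a⟩

theorem TwoMinimal.hd_ne_source [Finite A] {T : Set V} (hmin : TwoMinimal tl hd s T)
    (hacyc : Acyclic tl hd) (hsT : s ∉ T) (e : A) : hd e ≠ s := by
  intro he
  obtain ⟨t, htT, hlt⟩ := hmin.2 e
  have hst : s ≠ t := fun h => hsT (h ▸ htT)
  obtain ⟨P₁, P₂, h₁, h₂, hdisj⟩ := exists_disjoint_of_two_le_lam hst (hmin.1 t htT)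
  -- an arc into the source closes a cycle, so no path from the source uses it
  have havoid {p : List A} (hp : IsArcWalk tl hd s t p) : ∀ c ∈ p, c ≠ e := by
    rintro c hc rfl
    obtain ⟨p₁, -, -, hp₁, -⟩ := hp.exists_eq_append_cons hc
    simpa using hacyc s _ (hp₁.concat he)
  refine hlt.not_ge (two_le_lam_of_disjoint hst (h₁.attachWith (havoid h₁))
    (h₂.attachWith (havoid h₂)) fun c hc₁ hc₂ => ?_)
  exact hdisj ((List.mem_attachWith _ _).1 hc₁) ((List.mem_attachWith _ _).1 hc₂)

end Flow

theorem inArcs_eq_singleton [Finite A] {a : A} (h : inDeg hd (hd a) = 1) :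
    {c | hd c = hd a} = {a} :=
  (Set.eq_of_subset_of_ncard_le (by simp) (by rw [Set.ncard_singleton]; exact h.le)).symm

theorem inArcs_eq_pair [Finite A] {a b : A} (hab : a ≠ b) (hhd : hd a = hd b)
    (h : inDeg hd (hd a) = 2) : {c | hd c = hd a} = {a, b} :=
  (Set.eq_of_subset_of_ncard_le (by simp [Set.insert_subset_iff, hhd])
    (by rw [Set.ncard_pair hab]; exact h.le)).symm

section Coding

variable {K W : Type*} [Field K] [AddCommGroup W] [Module K W]

variable (K) in
def IsLocalCoding (tl hd : A → V) (s : V) (φ : A → W) : Prop :=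
  ∀ a, tl a ≠ s → φ a ∈ Submodule.span K (φ '' {b | hd b = tl a})

def DisjointRoutes (tl hd : A → V) (s : V) (f g : A) : Prop :=
  ∃ Pf Pg, IsArcWalk tl hd s (tl f) Pf ∧ IsArcWalk tl hd s (tl g) Pg ∧
    (Pf ++ [f]).Disjoint (Pg ++ [g])

theorem DisjointRoutes.symm {f g : A} (h : DisjointRoutes tl hd s f g) :
    DisjointRoutes tl hd s g f :=
  let ⟨Pf, Pg, hPf, hPg, hdisj⟩ := h
  ⟨Pg, Pf, hPg, hPf, hdisj.symm⟩

theorem DisjointRoutes.extend {f f' g : A} (h : DisjointRoutes tl hd s f' g)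
    (hf' : hd f' = tl f) (hfg : f ≠ g) (hoff : ∀ p, IsArcWalk tl hd s (tl g) p → f ∉ p) :
    DisjointRoutes tl hd s f g := by
  obtain ⟨Pf, Pg, hPf, hPg, hdisj⟩ := h
  refine ⟨Pf ++ [f'], Pg, hPf.concat hf', hPg, ?_⟩
  rw [List.disjoint_append_left]
  exact ⟨hdisj, List.singleton_disjoint.2 (by simpa [hfg] using hoff Pg hPg)⟩

variable {φ : A → W} (hφ : ∀ a, φ a ≠ 0)
include hφ

theorem IsLocalCoding.exists_inArc_mk_ne (hloc : IsLocalCoding K tl hd s φ) {f g : A}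
    (hf : tl f ≠ s) (hfg : mk K (φ f) (hφ f) ≠ mk K (φ g) (hφ g)) :
    ∃ f', hd f' = tl f ∧ mk K (φ f') (hφ f') ≠ mk K (φ g) (hφ g) := by
  by_contra! h
  refine hfg ((mk_eq_mk_iff_mem_span _ _).2 (Submodule.span_le.2 ?_ (hloc f hf)))
  rintro _ ⟨f', hf', rfl⟩
  exact (mk_eq_mk_iff_mem_span _ _).1 (h f' hf')

/-- Walking backwards from two arcs with distinct points, either route can be extended by an
in-arc whose point still differs from the other arc's; by acyclicity one of the two arcs cannot
lie on the other route, and that route is the one extended. -/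
theorem IsLocalCoding.disjointRoutes [Finite A] (hloc : IsLocalCoding K tl hd s φ)
    (hacyc : Acyclic tl hd) {f g : A} (hfg : mk K (φ f) (hφ f) ≠ mk K (φ g) (hφ g)) :
    DisjointRoutes tl hd s f g := by
  revert hfg
  refine Prod.GameAdd.recursion (C := fun f g => mk K (φ f) (hφ f) ≠ mk K (φ g) (hφ g) →
    DisjointRoutes tl hd s f g) hacyc.wellFounded_arcPrecedes hacyc.wellFounded_arcPrecedes
    (fun f g ih hfg => ?_) f g
  have hne : f ≠ g := by rintro rfl; exact hfg rfl
  have hoff {a b : A} (h : tl b = s ∨ ¬ ArcPrecedes tl hd a b) (p : List A)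
      (hp : IsArcWalk tl hd s (tl b) p) : a ∉ p := by
    rcases h with hb | hab
    · rw [hb] at hp
      simp [hacyc s p hp]
    · exact fun ha => hab (hp.arcPrecedes_of_mem ha)
  have extend_f (hf : tl f ≠ s) (h : tl g = s ∨ ¬ ArcPrecedes tl hd f g) :
      DisjointRoutes tl hd s f g := by
    obtain ⟨f', hf', hf'g⟩ := hloc.exists_inArc_mk_ne hφ hf hfg
    exact (ih f' g (.fst ⟨[], hf'⟩) hf'g).extend hf' hne (hoff h)
  have extend_g (hg : tl g ≠ s) (h : tl f = s ∨ ¬ ArcPrecedes tl hd g f) :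
      DisjointRoutes tl hd s f g := by
    obtain ⟨g', hg', hg'f⟩ := hloc.exists_inArc_mk_ne hφ hg (Ne.symm hfg)
    exact ((ih f g' (.snd ⟨[], hg'⟩) (Ne.symm hg'f)).symm.extend hg' hne.symm (hoff h)).symm
  by_cases hf : tl f = s <;> by_cases hg : tl g = s
  · exact ⟨[], [], hf.symm, hg.symm, by simpa [eq_comm] using hne⟩
  · exact extend_g hg (.inl hf)
  · exact extend_f hf (.inl hg)
  · by_cases hfg' : ArcPrecedes tl hd f g
    · exact extend_g hg (.inr fun hgf => hacyc.not_arcPrecedes_self f (hfg'.trans hgf))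
    · exact extend_f hf (.inr hfg')

theorem IsLocalCoding.two_le_lam [Finite A] (hloc : IsLocalCoding K tl hd s φ)
    (hacyc : Acyclic tl hd) (hst : s ≠ t) {f g : A} (hf : hd f = t) (hg : hd g = t)
    (hfg : mk K (φ f) (hφ f) ≠ mk K (φ g) (hφ g)) : 2 ≤ lam tl hd s t := by
  obtain ⟨Pf, Pg, hPf, hPg, hdisj⟩ := hloc.disjointRoutes hφ hacyc hfg
  exact two_le_lam_of_disjoint hst (hPf.concat hf) (hPg.concat hg) hdisj

theorem IsLocalCoding.mk_eq_of_subtreeRel [Finite A] (hloc : IsLocalCoding K tl hd s φ)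
    (hs : ∀ e, hd e ≠ s) {a b : A} (h : SubtreeRel tl hd a b) :
    mk K (φ a) (hφ a) = mk K (φ b) (hφ b) := by
  obtain ⟨hab, hdeg⟩ := h
  have hb := hloc b (hab ▸ hs a)
  rw [← hab, inArcs_eq_singleton hdeg, Set.image_singleton] at hb
  exact ((mk_eq_mk_iff_mem_span _ _).2 hb).symm

omit hφ in
theorem IsLocalCoding.deleteArc (hloc : IsLocalCoding K tl hd s φ) {a b : A} (hab : a ≠ b)
    (hhd : hd a = hd b) (hba : φ b ∈ K ∙ φ a) :
    IsLocalCoding K (fun c : {c // c ≠ b} => tl c.1) (fun c => hd c.1) s (fun c => φ c.1) := by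
  intro c hc
  refine Submodule.span_le.2 ?_ (hloc c.1 hc)
  rintro _ ⟨d, hd', rfl⟩
  by_cases hdb : d = b
  · subst hdb
    refine Submodule.span_mono ?_ hba
    exact Set.singleton_subset_iff.2 ⟨⟨a, hab⟩, hhd.trans hd', rfl⟩
  · exact Submodule.subset_span ⟨⟨d, hdb⟩, hd', rfl⟩

theorem exists_mk_ne_of_span_eq_top (hW : 1 < Module.finrank K W) {S : Set A}
    (h : Submodule.span K (φ '' S) = ⊤) :
    ∃ f ∈ S, ∃ g ∈ S, mk K (φ f) (hφ f) ≠ mk K (φ g) (hφ g) := by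
  by_contra! hS
  obtain ⟨w, hw⟩ : ∃ w : W, Submodule.span K (φ '' S) ≤ K ∙ w := by
    rcases S.eq_empty_or_nonempty with rfl | ⟨g, hg⟩
    · exact ⟨0, by simp⟩
    · refine ⟨φ g, Submodule.span_le.2 ?_⟩
      rintro _ ⟨f, hf, rfl⟩
      exact (mk_eq_mk_iff_mem_span _ _).1 (hS f hf g hg)
  rw [h, top_le_iff] at hw
  have := finrank_span_le_card (R := K) ({w} : Set W)
  rw [hw, finrank_top] at this
  simp at this
  omega

end Coding

section Solution

variable {T : Set V} {F : Type} [Field F] {φ : A → F × F}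

theorem IsCodingSolution.isLocalCoding (hφ : IsCodingSolution tl hd s T φ) :
    IsLocalCoding F tl hd s φ :=
  hφ.2.1

theorem IsCodingSolution.mk_ne_of_inDeg_eq_two [Finite A] (hφ : IsCodingSolution tl hd s T φ)
    (hacyc : Acyclic tl hd) (hmin : TwoMinimal tl hd s T) (hsT : s ∉ T) {a b : A} (hab : a ≠ b)
    (hhd : hd a = hd b) (hdeg : inDeg hd (hd a) = 2) :
    mk F (φ a) (hφ.1 a) ≠ mk F (φ b) (hφ.1 b) := by
  intro heq
  have hrank : 1 < Module.finrank F (F × F) := by simp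
  by_cases hT : hd a ∈ T
  · -- the span at the receiver `hd a` would be the line through `φ a`
    obtain ⟨f, hf, g, hg, hfg⟩ := exists_mk_ne_of_span_eq_top hφ.1 hrank (hφ.2.2 _ hT)
    have hpt : ∀ c ∈ {c | hd c = hd a}, mk F (φ c) (hφ.1 c) = mk F (φ a) (hφ.1 a) := by
      rw [inArcs_eq_pair hab hhd hdeg]
      rintro c (rfl | rfl)
      exacts [rfl, heq.symm]
    exact hfg ((hpt f hf).trans (hpt g hg).symm)
  · -- `b` can be deleted without destroying the coding solution, contradicting minimality
    obtain ⟨t, htT, hlt⟩ := hmin.2 b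
    have hst : s ≠ t := fun h => hsT (h ▸ htT)
    obtain ⟨f, hf, g, hg, hfg⟩ := exists_mk_ne_of_span_eq_top hφ.1 hrank (hφ.2.2 t htT)
    have hne {c : A} (hc : hd c = t) : c ≠ b := by
      rintro rfl
      exact hT (hhd ▸ hc ▸ htT)
    have hloc := hφ.isLocalCoding.deleteArc hab hhd ((mk_eq_mk_iff_mem_span _ _).1 heq.symm)
    exact hlt.not_ge (hloc.two_le_lam (fun c => hφ.1 c.1) (hacyc.comap _) hst
      (f := ⟨f, hne hf⟩) (g := ⟨g, hne hg⟩) hf hg hfg)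

end Solution

theorem subtreeGraph_colorable_of_codingSolution_general
    {V A : Type} [Fintype A] (tl hd : A → V) (s : V) (T : Set V)
    (hsT : s ∉ T) (hacyc : Acyclic tl hd) (hmin : TwoMinimal tl hd s T)
    (q : ℕ) (F : Type) [Field F] [Fintype F] (hF : Fintype.card F = q)
    (φ : A → F × F) (hφ : IsCodingSolution tl hd s T φ) :
    (subtreeGraph tl hd).Colorable (q + 1) := by
  let color : Subtrees tl hd → ℙ F (F × F) := Quot.lift (fun a => mk F (φ a) (hφ.1 a))
    fun _ _ => hφ.isLocalCoding.mk_eq_of_subtreeRel hφ.1 (hmin.hd_ne_source hacyc hsT)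
  have C : (subtreeGraph tl hd).Coloring (ℙ F (F × F)) := .mk color <| by
    rintro _ _ ⟨hxy, a, b, rfl, rfl, hhd, hdeg⟩
    exact hφ.mk_ne_of_inDeg_eq_two hacyc hmin hsT (fun h => hxy (congrArg _ h)) hhd hdeg
  have := Fintype.ofFinite (ℙ F (F × F))
  have hcard : Fintype.card (ℙ F (F × F)) = q + 1 := by
    rw [← Nat.card_eq_fintype_card, card_of_finrank_two F (F × F) (by simp),
      Nat.card_eq_fintype_card, hF]
  exact hcard ▸ C.colorable

/-- Lemma 1: if a 2-minimal acyclic multicast network has a rate-2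
linear coding solution over a field of size `q`, then its subtree graph is properly
`(q+1)`-colorable. -/
theorem subtreeGraph_colorable_of_codingSolution
    {V A : Type} [Fintype V] [Fintype A] (tl hd : A → V) (s : V) (T : Set V)
    (hsT : s ∉ T) (hacyc : Acyclic tl hd) (hmin : TwoMinimal tl hd s T)
    (q : ℕ) (F : Type) [Field F] [Fintype F] (hF : Fintype.card F = q)
    (φ : A → F × F) (hφ : IsCodingSolution tl hd s T φ) :
    (subtreeGraph tl hd).Colorable (q + 1) :=
  subtreeGraph_colorable_of_codingSolution_general tl hd s T hsT hacyc hmin q F hF φ hφ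

end NCMinor
end

section
/- Fix a prime power q ≥ 2. Suppose that every 2-minimal acyclic multicast network whose underlying topology is K_{q+2}-minor-free admits a rate-2 linear coding solution over the finite field F_q. Then every finite simple graph with chromatic number q + 2 contains K_{q+1} as a minor. (That is, the NC-Minor Conjecture for q implies the Weak Hadwiger Conjecture for q + 2.) -/
/-!
Given `H`, take the network with a source `s`, a node `x_w` fed by `s` for every non-isolated
vertex `w`, and for every dart `(u, v)` of `H` a receiver `r_(u,v)` fed by `x_u` and `x_v`. It
is acyclic and 2-minimal, and its topology is the cone over a subdivision of `H`. In a `K_{q+2}`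
minor of that topology every branch set avoiding the apex `s` contains a vertex node (a branch
set `{r_e}` meets only the two branch sets holding the ends of `e`, but must meet all `q + 1 ≥ 3`
others), and pulling these branch sets back along `w ↦ x_w` gives a `K_{q+1}` minor of `H`.

So if `H` had no `K_{q+1}` minor, the network would have a coding solution `φ` over `F`. The
receiver `r_(u,v)` decodes only if `φ(s → x_u)` and `φ(s → x_v)` span different lines, so
`w ↦ [φ(s → x_w)]` properly colours `H` with the `q + 1` points of the projective line over `F`,
contradicting `χ(H) = q + 2`.
-/

namespace NCMinor

section Walks

variable {V A : Type} {tl hd : A → V}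

theorem IsArcWalk.rank_le (ρ : V → ℕ) (hρ : ∀ a, ρ (tl a) < ρ (hd a)) :
    ∀ {p : List A} {u v : V}, IsArcWalk tl hd u v p → ρ u ≤ ρ v
  | [], _, _, h => (congrArg ρ h).le
  | a :: _, _, _, ⟨rfl, h⟩ => (hρ a).le.trans (IsArcWalk.rank_le ρ hρ h)

theorem acyclic_of_rank (ρ : V → ℕ) (hρ : ∀ a, ρ (tl a) < ρ (hd a)) : Acyclic tl hd
  | _, [], _ => rfl
  | _, a :: _, ⟨rfl, h⟩ => absurd (IsArcWalk.rank_le ρ hρ h) (hρ a).not_ge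

theorem IsArcWalk.exists_mem_hd_eq :
    ∀ {p : List A} {u v : V}, IsArcWalk tl hd u v p → u ≠ v → ∃ a ∈ p, hd a = v
  | [], _, _, h, huv => absurd h huv
  | a :: p, _, v, ⟨_, h⟩, _ => by
    by_cases hav : hd a = v
    · exact ⟨a, List.mem_cons_self, hav⟩
    · obtain ⟨b, hb, hbv⟩ := h.exists_mem_hd_eq hav
      exact ⟨b, List.mem_cons_of_mem a hb, hbv⟩

theorem IsArcWalk.mem_of_forall_hd_eq {p : List A} {u v : V} (h : IsArcWalk tl hd u v p)
    (huv : u ≠ v) {b : A} (hb : ∀ a ∈ p, hd a = v → a = b) : b ∈ p := by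
  obtain ⟨a, ha, hav⟩ := h.exists_mem_hd_eq huv
  exact hb a ha hav ▸ ha

theorem IsArcWalk.exists_mem_hd_eq_tl :
    ∀ {p : List A} {u v : V}, IsArcWalk tl hd u v p →
      ∀ e ∈ p, tl e ≠ u → ∃ a ∈ p, hd a = tl e
  | a :: p, _, _, ⟨rfl, h⟩, e, he, hne => by
    rcases List.mem_cons.mp he with rfl | he
    · exact absurd rfl hne
    · by_cases hae : tl e = hd a
      · exact ⟨a, List.mem_cons_self, hae.symm⟩
      · obtain ⟨b, hb, hbe⟩ := h.exists_mem_hd_eq_tl e he hae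
        exact ⟨b, List.mem_cons_of_mem a hb, hbe⟩

theorem two_le_lam [Finite A] {s v : V} (hsv : s ≠ v) {p₀ p₁ : List A}
    (h₀ : IsArcWalk tl hd s v p₀) (h₁ : IsArcWalk tl hd s v p₁)
    (hdisj : ∀ a ∈ p₀, a ∉ p₁) : 2 ≤ lam tl hd s v := by
  have hbdd : BddAbove {k | ∃ P : Fin k → List A, (∀ i, IsArcWalk tl hd s v (P i)) ∧
      ∀ i j : Fin k, i ≠ j → ∀ a, a ∈ P i → a ∉ P j} := by
    refine ⟨Nat.card A, ?_⟩
    rintro k ⟨P, hP, hPdisj⟩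
    have hne : ∀ i, P i ≠ [] := fun i hi => hsv (by simpa [hi, IsArcWalk] using hP i)
    have hinj : Function.Injective fun i => (P i).head (hne i) := by
      intro i j hij
      by_contra hij'
      exact hPdisj i j hij' _ (List.head_mem _)
        ((congrArg (· ∈ P j) hij).mpr (List.head_mem _))
    simpa using Nat.card_le_card_of_injective _ hinj
  refine le_csSup hbdd ⟨![p₀, p₁], fun i => by fin_cases i <;> assumption, ?_⟩
  intro i j hij a hi hj
  fin_cases i <;> fin_cases j
  all_goals first | exact hij rfl | exact hdisj a hi hj | exact hdisj a hj hi

theorem lam_lt_two_of_forall_mem {s v : V} (b : A)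
    (hb : ∀ p, IsArcWalk tl hd s v p → b ∈ p) : lam tl hd s v < 2 := by
  suffices lam tl hd s v ≤ 1 by omega
  refine csSup_le ⟨0, Fin.elim0, fun i => i.elim0, fun i => i.elim0⟩ ?_
  rintro k ⟨P, hP, hdisj⟩
  by_contra! hk
  exact hdisj ⟨0, by omega⟩ ⟨1, hk⟩ (by simp [Fin.ext_iff]) b (hb _ (hP _)) (hb _ (hP _))

end Walks

section Minors

variable {V X : Type}

structure IsMinorModel (M : SimpleGraph X) (G : SimpleGraph V) (B : X → Set V) : Prop where
  connected : ∀ m, (G.induce (B m)).Connected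
  disjoint : Pairwise fun m m' => Disjoint (B m) (B m')
  exists_adj : ∀ m m', M.Adj m m' → ∃ u ∈ B m, ∃ v ∈ B m', G.Adj u v

theorem isMinor_iff {M : SimpleGraph X} {G : SimpleGraph V} :
    IsMinor M G ↔ ∃ B, IsMinorModel M G B :=
  ⟨fun ⟨B, h₁, h₂, h₃⟩ => ⟨B, h₁, h₂, h₃⟩, fun ⟨B, h⟩ => ⟨B, h.1, h.2, h.3⟩⟩

theorem exists_forall_ne_notMem_of_pairwise_disjoint [Nonempty X] {B : X → Set V}
    (hB : Pairwise fun m m' => Disjoint (B m) (B m')) (v : V) : ∃ m₀, ∀ m ≠ m₀, v ∉ B m := by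
  by_cases h : ∃ m₀, v ∈ B m₀
  · obtain ⟨m₀, hm₀⟩ := h
    exact ⟨m₀, fun m hm hv => Set.disjoint_left.mp (hB hm) hv hm₀⟩
  · exact ⟨Classical.arbitrary X, fun m _ hm => h ⟨m, hm⟩⟩

theorem exists_mem_adj_of_connected_induce {G : SimpleGraph V} {B : Set V}
    (hB : (G.induce B).Connected) {a b : V} (ha : a ∈ B) (hb : b ∈ B) (hab : a ≠ b) :
    ∃ c ∈ B, G.Adj a c := by
  have : Nontrivial B := ⟨⟨a, ha⟩, ⟨b, hb⟩, by simpa using hab⟩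
  obtain ⟨⟨c, hc⟩, hac⟩ := hB.preconnected.exists_adj_of_nontrivial ⟨a, ha⟩
  exact ⟨c, hc, by simpa using hac⟩

end Minors

theorem mk_ne_mk_of_span_eq_top {K U : Type} [Field K] [AddCommGroup U] [Module K U]
    [FiniteDimensional K U] (hU : 1 < Module.finrank K U) {x y u v : U} (hx : x ≠ 0)
    (hy : y ≠ 0) (hu : u ∈ K ∙ x) (hv : v ∈ K ∙ y)
    (huv : Submodule.span K {u, v} = ⊤) :
    Projectivization.mk K x hx ≠ Projectivization.mk K y hy := by
  intro hxy
  have hyx : K ∙ y = K ∙ x := by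
    rw [← Projectivization.submodule_mk y hy, ← hxy, Projectivization.submodule_mk]
  have hle : (⊤ : Submodule K U) ≤ K ∙ x := by
    rw [← huv, Submodule.span_le]
    rintro w (rfl | rfl)
    · exact hu
    · exact hyx ▸ hv
  have := Submodule.finrank_mono hle
  rw [finrank_top, finrank_span_singleton hx] at this
  omega

section Network

variable {W : Type} (H : SimpleGraph W)

/-- `none` is the source `s`, `some (.inl w)` is `x_w` and `some (.inr e)` is `r_e`. -/
abbrev NetNode := Option (W ⊕ H.Dart)

abbrev vertexNode (w : W) : NetNode H := some (.inl w)

-- The arc `s → x_w` exists only for `w` in the support: one into an isolated vertex could be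
-- deleted, against 2-minimality.
abbrev NetArc := H.support ⊕ (H.Dart ⊕ H.Dart)

def netTail : NetArc H → NetNode H
  | .inl _ => none
  | .inr (.inl e) => some (.inl e.fst)
  | .inr (.inr e) => some (.inl e.snd)

def netHead : NetArc H → NetNode H
  | .inl w => some (.inl w)
  | .inr (.inl e) => some (.inr e)
  | .inr (.inr e) => some (.inr e)

def netReceivers : Set (NetNode H) := Set.range fun e => some (.inr e)

abbrev netTopology : SimpleGraph (NetNode H) := topology (netTail H) (netHead H)

variable {H}

theorem acyclic_net : Acyclic (netTail H) (netHead H) :=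
  acyclic_of_rank (fun | none => 0 | some (.inl _) => 1 | some (.inr _) => 2)
    (by rintro (_ | _ | _) <;> simp [netTail, netHead])

theorem netHead_eq_vertexNode {b : NetArc H} {w : W} :
    netHead H b = vertexNode H w ↔ ∃ hw : w ∈ H.support, b = .inl ⟨w, hw⟩ := by
  rcases b with ⟨v, hv⟩ | e | e <;> simp [netHead, eq_comm]
  exact fun h => h ▸ hv

theorem netHead_eq_receiver {b : NetArc H} {e : H.Dart} :
    netHead H b = some (.inr e) ↔ b = .inr (.inl e) ∨ b = .inr (.inr e) := by
  rcases b with ⟨v, hv⟩ | e' | e' <;> simp [netHead, eq_comm]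

theorem netTopology_adj_vertex_vertex {v w : W} :
    ¬ (netTopology H).Adj (vertexNode H v) (vertexNode H w) := by
  simp [topology, netTail, netHead, Sum.exists]

theorem netTopology_adj_receiver_receiver {e e' : H.Dart} :
    ¬ (netTopology H).Adj (some (.inr e)) (some (.inr e')) := by
  simp [topology, netTail, netHead, Sum.exists]

theorem netTopology_adj_receiver {e : H.Dart} {v : NetNode H} :
    (netTopology H).Adj (some (.inr e)) v ↔
      v = vertexNode H e.fst ∨ v = vertexNode H e.snd := by
  simp only [topology, netTail, netHead, Sum.exists]
  aesop

instance [Finite W] : Finite H.Dart := Finite.of_injective _ SimpleGraph.Dart.toProd_injective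

theorem twoMinimal_net [Finite W] :
    TwoMinimal (netTail H) (netHead H) none (netReceivers H) := by
  classical
  refine ⟨?_, ?_⟩
  · rintro _ ⟨e, rfl⟩
    refine two_le_lam (Option.some_ne_none _).symm
      (p₀ := [.inl ⟨e.fst, H.mem_support.mpr ⟨e.snd, e.adj⟩⟩, .inr (.inl e)])
      (p₁ := [.inl ⟨e.snd, H.mem_support.mpr ⟨e.fst, e.adj.symm⟩⟩, .inr (.inr e)])
      ⟨rfl, rfl, rfl⟩ ⟨rfl, rfl, rfl⟩ ?_
    simp [e.adj.ne]
  · rintro (⟨u, hu⟩ | e | e)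
    · -- without its feeding arc `u` is unreachable, so a walk into the receiver of `(u, z)`
      -- must end with the arc from `z`
      obtain ⟨z, huz⟩ := H.mem_support.mp hu
      let d : H.Dart := ⟨(u, z), huz⟩
      refine ⟨_, ⟨d, rfl⟩, lam_lt_two_of_forall_mem ⟨.inr (.inr d), by simp⟩ fun p hp => ?_⟩
      refine hp.mem_of_forall_hd_eq (Option.some_ne_none _).symm fun c hc hcd => ?_
      rcases netHead_eq_receiver.mp hcd with h | h
      · obtain ⟨c', -, hc'⟩ := hp.exists_mem_hd_eq_tl c hc (by simp [h, netTail])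
        obtain ⟨_, h'⟩ := netHead_eq_vertexNode.mp (by simpa [h, netTail] using hc')
        exact absurd h' c'.2
      · exact Subtype.ext h
    · refine ⟨_, ⟨e, rfl⟩, lam_lt_two_of_forall_mem ⟨.inr (.inr e), by simp⟩ fun p hp => ?_⟩
      refine hp.mem_of_forall_hd_eq (Option.some_ne_none _).symm fun c _ hcd => ?_
      exact Subtype.ext ((netHead_eq_receiver.mp hcd).resolve_left c.2)
    · refine ⟨_, ⟨e, rfl⟩, lam_lt_two_of_forall_mem ⟨.inr (.inl e), by simp⟩ fun p hp => ?_⟩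
      refine hp.mem_of_forall_hd_eq (Option.some_ne_none _).symm fun c _ hcd => ?_
      exact Subtype.ext ((netHead_eq_receiver.mp hcd).resolve_right c.2)

theorem setOf_netHead_eq_vertexNode {w : W} (hw : w ∈ H.support) :
    {b | netHead H b = vertexNode H w} = {.inl ⟨w, hw⟩} := by
  ext b
  simp [netHead_eq_vertexNode, hw]

theorem setOf_netHead_eq_receiver (e : H.Dart) :
    {b | netHead H b = some (.inr e)} = {.inr (.inl e), .inr (.inr e)} := by
  ext b
  simp [netHead_eq_receiver]

theorem colorable_of_isCodingSolution {F : Type} [Field F] [Finite F]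
    {φ : NetArc H → F × F}
    (hφ : IsCodingSolution (netTail H) (netHead H) none (netReceivers H) φ) :
    H.Colorable (Nat.card F + 1) := by
  classical
  obtain ⟨hφ0, hφmid, hφrec⟩ := hφ
  have hmid : ∀ a {w : W} (hw : w ∈ H.support), netTail H a = vertexNode H w →
      φ a ∈ F ∙ φ (.inl ⟨w, hw⟩) := fun a w hw ha => by
    simpa [ha, setOf_netHead_eq_vertexNode hw] using hφmid a (by simp [ha])
  let color (w : W) : Projectivization F (F × F) :=
    if hw : w ∈ H.support then .mk F (φ (.inl ⟨w, hw⟩)) (hφ0 _) else .mk F (1, 0) (by simp)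
  have hcolor : ∀ {u v : W}, H.Adj u v → color u ≠ color v := by
    intro u v huv
    let e : H.Dart := ⟨(u, v), huv⟩
    have hu : u ∈ H.support := H.mem_support.mpr ⟨v, huv⟩
    have hv : v ∈ H.support := H.mem_support.mpr ⟨u, huv.symm⟩
    have hspan := hφrec _ ⟨e, rfl⟩
    rw [setOf_netHead_eq_receiver, Set.image_pair] at hspan
    simp only [color, dif_pos hu, dif_pos hv]
    exact mk_ne_mk_of_span_eq_top (by simp) _ _ (hmid (.inr (.inl e)) hu rfl)
      (hmid (.inr (.inr e)) hv rfl) hspan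
  have := Fintype.ofFinite (Projectivization F (F × F))
  have hcard : Nat.card (Projectivization F (F × F)) = Nat.card F + 1 :=
    Projectivization.card_of_finrank_two F _ (by simp)
  rw [← hcard, ← Fintype.card_eq_nat_card]
  exact (SimpleGraph.Coloring.mk color hcolor).colorable

def LiesOver : NetNode H → W → Prop
  | none, _ => False
  | some (.inl v), w => v = w
  | some (.inr e), w => w = e.fst ∨ w = e.snd

theorem eq_or_adj_of_liesOver {a c : NetNode H} {w w' : W}
    (hac : a = c ∨ (netTopology H).Adj a c) (ha : LiesOver a w) (hc : LiesOver c w') :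
    w = w' ∨ H.Adj w w' := by
  have hends : ∀ {e : H.Dart} {w w' : W}, w = e.fst ∨ w = e.snd → w' = e.fst ∨ w' = e.snd →
      w = w' ∨ H.Adj w w' := by
    rintro e _ _ (rfl | rfl) (rfl | rfl) <;> simp [e.adj, e.adj.symm]
  rcases a with _ | v | e <;> rcases c with _ | v' | e'
  all_goals simp only [LiesOver] at ha hc
  · subst ha hc
    rcases hac with h | h
    · exact Or.inl (by simpa using h)
    · exact absurd h netTopology_adj_vertex_vertex
  · subst ha
    have hv := netTopology_adj_receiver.mp (hac.resolve_left (by simp)).symm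
    exact hends (by simpa using hv) hc
  · subst hc
    have hv := netTopology_adj_receiver.mp (hac.resolve_left (by simp))
    exact hends ha (by simpa using hv)
  · rcases hac with h | h
    · obtain rfl : e = e' := by simpa using h
      exact hends ha hc
    · exact absurd h netTopology_adj_receiver_receiver

theorem exists_liesOver_mem {B : Set (NetNode H)} (hB : ((netTopology H).induce B).Connected)
    (hnone : none ∉ B) {z : W} (hz : vertexNode H z ∈ B) {a : NetNode H} (ha : a ∈ B) :
    ∃ w, LiesOver a w ∧ vertexNode H w ∈ B := by
  rcases a with _ | v | e
  · exact absurd ha hnone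
  · exact ⟨v, rfl, ha⟩
  · obtain ⟨c, hc, hec⟩ := exists_mem_adj_of_connected_induce hB ha hz (by simp)
    rcases netTopology_adj_receiver.mp hec with rfl | rfl
    exacts [⟨_, Or.inl rfl, hc⟩, ⟨_, Or.inr rfl, hc⟩]

theorem reachable_of_liesOver {B : Set (NetNode H)} {a c : NetNode H} {w w' : W}
    (hw : vertexNode H w ∈ B) (hw' : vertexNode H w' ∈ B)
    (hac : a = c ∨ (netTopology H).Adj a c) (ha : LiesOver a w) (hc : LiesOver c w') :
    (H.induce (vertexNode H ⁻¹' B)).Reachable ⟨w, hw⟩ ⟨w', hw'⟩ := by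
  rcases eq_or_adj_of_liesOver hac ha hc with rfl | h
  · rfl
  · exact SimpleGraph.Adj.reachable (by simpa using h)

theorem preconnected_induce_vertexNode_preimage {B : Set (NetNode H)}
    (hB : ((netTopology H).induce B).Connected) (hnone : none ∉ B) {z : W}
    (hz : vertexNode H z ∈ B) :
    (H.induce (vertexNode H ⁻¹' B)).Preconnected := by
  have key : ∀ {a b : B} (p : ((netTopology H).induce B).Walk a b) {w w' : W}
      (hw : vertexNode H w ∈ B) (hw' : vertexNode H w' ∈ B),
      LiesOver a.1 w → LiesOver b.1 w' →
      (H.induce (vertexNode H ⁻¹' B)).Reachable ⟨w, hw⟩ ⟨w', hw'⟩ := by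
    intro a b p
    induction p with
    | nil => exact fun hw hw' ha hb => reachable_of_liesOver hw hw' (Or.inl rfl) ha hb
    | cons h p ih =>
      intro w w' hw hw' ha hb
      obtain ⟨u, hu, huB⟩ := exists_liesOver_mem hB hnone hz (Subtype.prop _)
      exact (reachable_of_liesOver hw huB (Or.inr (by simpa using h)) ha hu).trans
        (ih huB hw' hu hb)
  rintro ⟨w, hw⟩ ⟨w', hw'⟩
  obtain ⟨p⟩ := hB.preconnected ⟨_, hw⟩ ⟨_, hw'⟩
  exact key p hw hw' rfl rfl

theorem exists_vertexNode_mem {n : ℕ} (hn : 3 ≤ n) {B : Fin (n + 1) → Set (NetNode H)}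
    (hB : IsMinorModel (⊤ : SimpleGraph (Fin (n + 1))) (netTopology H) B) {i : Fin (n + 1)}
    (hi : none ∉ B i) : ∃ z, vertexNode H z ∈ B i := by
  classical
  obtain ⟨⟨a, ha⟩⟩ := (hB.connected i).nonempty
  by_contra! hno
  obtain ⟨e, rfl⟩ : ∃ e, a = some (.inr e) := by
    rcases a with _ | v | e
    · exact absurd ha hi
    · exact absurd ha (hno v)
    · exact ⟨e, rfl⟩
  have hsingle : ∀ c ∈ B i, c = some (.inr e) := by
    intro c hc
    by_contra hce
    obtain ⟨d, hd, hed⟩ :=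
      exists_mem_adj_of_connected_induce (hB.connected i) ha hc (Ne.symm hce)
    rcases netTopology_adj_receiver.mp hed with rfl | rfl
    exacts [hno _ hd, hno _ hd]
  -- every other branch set touches the lone receiver, hence contains one of its two ends
  have hend : ∀ k : Fin n, ∃ w ∈ ({e.fst, e.snd} : Finset W),
      vertexNode H w ∈ B (i.succAbove k) := by
    intro k
    obtain ⟨u, hu, c, hc, huc⟩ := hB.exists_adj (i.succAbove k) i (by simp [Fin.succAbove_ne])
    obtain rfl := hsingle c hc
    rcases netTopology_adj_receiver.mp huc.symm with rfl | rfl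
    exacts [⟨_, by simp, hu⟩, ⟨_, by simp, hu⟩]
  choose g hg hgB using hend
  have hinj : Set.InjOn g (Finset.univ : Finset (Fin n)) := by
    intro k _ l _ hkl
    by_contra hne
    exact Set.disjoint_left.mp (hB.disjoint (Fin.succAbove_right_injective.ne hne))
      (hgB k) (hkl ▸ hgB l)
  have hcard := Finset.card_le_card_of_injOn g (fun k _ => hg k) hinj
  have htwo := Finset.card_le_two (a := e.fst) (b := e.snd)
  simp only [Finset.card_univ, Fintype.card_fin] at hcard
  omega

theorem isMinor_of_isMinor_netTopology {n : ℕ} (hn : 3 ≤ n)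
    (h : IsMinor (⊤ : SimpleGraph (Fin (n + 1))) (netTopology H)) :
    IsMinor (⊤ : SimpleGraph (Fin n)) H := by
  obtain ⟨B, hB⟩ := isMinor_iff.mp h
  obtain ⟨i₀, hi₀⟩ := exists_forall_ne_notMem_of_pairwise_disjoint hB.disjoint none
  have hnone : ∀ k, none ∉ B (i₀.succAbove k) := fun k => hi₀ _ (Fin.succAbove_ne i₀ k)
  have hvert : ∀ k, ∃ z, vertexNode H z ∈ B (i₀.succAbove k) :=
    fun k => exists_vertexNode_mem hn hB (hnone k)
  refine isMinor_iff.mpr ⟨fun k => vertexNode H ⁻¹' B (i₀.succAbove k),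
    fun k => ?_, fun k l hkl => ?_, fun k l hkl => ?_⟩
  · obtain ⟨z, hz⟩ := hvert k
    have : Nonempty (vertexNode H ⁻¹' B (i₀.succAbove k)) := ⟨⟨z, hz⟩⟩
    exact ⟨preconnected_induce_vertexNode_preimage (hB.connected _) (hnone k) hz⟩
  · exact (hB.disjoint (Fin.succAbove_right_injective.ne hkl)).preimage _
  · have hkl' : i₀.succAbove k ≠ i₀.succAbove l := Fin.succAbove_right_injective.ne hkl
    obtain ⟨a, ha, c, hc, hac⟩ := hB.exists_adj _ _ hkl'
    obtain ⟨z, hz⟩ := hvert k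
    obtain ⟨z', hz'⟩ := hvert l
    obtain ⟨w, hw, hwB⟩ := exists_liesOver_mem (hB.connected _) (hnone k) hz ha
    obtain ⟨w', hw', hwB'⟩ := exists_liesOver_mem (hB.connected _) (hnone l) hz' hc
    rcases eq_or_adj_of_liesOver (Or.inr hac) hw hw' with rfl | hadj
    · exact absurd hwB' (Set.disjoint_left.mp (hB.disjoint hkl') hwB)
    · exact ⟨w, hwB, w', hwB', hadj⟩

end Network

/-- Theorem 2: the NC-Minor Conjecture for a prime power `q`
(realized by the finite field `F` with `q` elements) implies the Weak Hadwiger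
Conjecture at `q + 2`. -/
theorem weakHadwiger_of_NCMinor
    (q : ℕ) (hq : 2 ≤ q) (F : Type) [Field F] [Fintype F] (hF : Fintype.card F = q)
    (hNC : ∀ (V A : Type) [Fintype V] [Fintype A] (tl hd : A → V) (s : V) (T : Set V),
      s ∉ T → Acyclic tl hd → TwoMinimal tl hd s T →
      ¬ IsMinor (⊤ : SimpleGraph (Fin (q + 2))) (topology tl hd) →
      ∃ φ : A → F × F, IsCodingSolution tl hd s T φ)
    (W : Type) [Fintype W] (H : SimpleGraph W)
    (hchrom : H.chromaticNumber = ((q : ℕ∞) + 2)) :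
    IsMinor (⊤ : SimpleGraph (Fin (q + 1))) H := by
  by_contra hK
  have := Fintype.ofFinite (NetNode H)
  have := Fintype.ofFinite (NetArc H)
  obtain ⟨φ, hφ⟩ := hNC (NetNode H) (NetArc H) (netTail H) (netHead H) none (netReceivers H)
    (by rintro ⟨e, ⟨⟩⟩) acyclic_net twoMinimal_net
    (fun hM => hK (isMinor_of_isMinor_netTopology (by omega) hM))
  have hcol : H.Colorable (q + 1) := by
    simpa [Nat.card_eq_fintype_card, hF] using colorable_of_isCodingSolution hφ
  have hle := hcol.chromaticNumber_le
  rw [hchrom] at hle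
  norm_cast at hle
  omega

end NCMinor
end
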